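/- Let f : [0,1]^n → [0,1] be continuous and polynomially bounded, let L = {p ∈ [0,1]^n : f(p) ≤ 3/8}, and let δ ∈ (0, 1/2). Let (A,S,B) be a partition of {1,…,n}, let q ∈ F_{A,S,B} with f identically 0 on F_{A,S,B}, and let T ⊆ A ∪ B be a set such that f is NOT identically 0 on the open face F_{A∖T, S∪T, B∖T}. Then there exist a radius r > 0 and an integer t such that for every p ∈ L with ‖p − q‖_∞ < r: P_p[ X̄_{t,i} − p_i > δ/2 for all i ∈ T∩A, and p_i − X̄_{t,i} > δ/2 for all i ∈ T∩B ] ≤ f(p)/2^{n+2}. -/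

import Mathlib

open Finset

def cube (n : ℕ) : Set (Fin n → ℝ) := {p | ∀ i, 0 ≤ p i ∧ p i ≤ 1}

/-- The open face `F_{A,S,B}` of the hypercube, where `S` is the complement of `A ∪ B`. -/
def face {n : ℕ} (A B : Finset (Fin n)) : Set (Fin n → ℝ) :=
  {p | (∀ i ∈ A, p i = 0) ∧ (∀ i ∈ B, p i = 1) ∧ ∀ i ∉ A ∪ B, 0 < p i ∧ p i < 1}

/-- `(1-p)^A · (p(1-p))^S · p^B` for the face `F_{A,S,B}`. -/
noncomputable def facePoly {n : ℕ} (A B : Finset (Fin n)) (p : Fin n → ℝ) : ℝ :=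
  (∏ i ∈ A, (1 - p i)) * (∏ i ∈ (A ∪ B)ᶜ, p i * (1 - p i)) * (∏ i ∈ B, p i)
/-- A function `f : [0,1]^n → [0,1]` is polynomially bounded. -/
def PolyBounded {n : ℕ} (f : (Fin n → ℝ) → ℝ) : Prop :=
  ∃ (m : ℕ) (c : ℝ), 0 < c ∧ ∀ A B : Finset (Fin n), Disjoint A B →
    (¬ ∀ q ∈ face A B, f q = 0) →
    ∀ p ∈ cube n, c * facePoly A B p ^ m ≤ f p
/-- Probability weight of a realization `x` of `t` flips of the `n` coins `p`. -/
noncomputable def flipWeight {n t : ℕ} (p : Fin n → ℝ) (x : Fin t → Fin n → Bool) : ℝ :=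
  ∏ s, ∏ i, if x s i then p i else 1 - p i

/-- `P_p[E]`, the probability of the event `E` for `t` i.i.d. flips of the `n` coins `p`. -/
noncomputable def coinProb {n : ℕ} (t : ℕ) (p : Fin n → ℝ)
    (E : Set (Fin t → Fin n → Bool)) : ℝ :=
  ∑ x : Fin t → Fin n → Bool, Set.indicator E (flipWeight p) x

/-- The empirical average `X̄_t` of the coin flips `x`. -/
noncomputable def empAvg {n : ℕ} (t : ℕ) (x : Fin t → Fin n → Bool) : Fin n → ℝ :=
  fun i => (∑ s, if x s i then (1 : ℝ) else 0) / t


/-! Let `Q p = ∏_{i ∈ T} w_i(p)` with `w_i(p) = p_i` for `i ∈ A` and `1 - p_i` for `i ∈ B`: the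
probability that a single flip lands away from `q` on every coordinate of `T`. Once
`t δ / 2 ≥ m + 1`, the event forces each coin `i ∈ T` to land away from `q` at least `m + 1` times,
so its probability is at most `2^{tn} Q(p)^{m+1}`. On the other hand
`facePoly (A \ T) (B \ T) = facePoly A B · Q`, and `facePoly A B ≥ κ > 0` near `q`, so
polynomial boundedness (exponent `m`, constant `c`) gives `f p ≥ c (κ Q(p))^m`. Since `Q q = 0`,
the spare factor `Q p` makes the first bound the smaller one close to `q`. -/

open Filter Topology

def coinWeight (a : ℝ) (b : Bool) : ℝ := if b then a else 1 - a

def columnWeight {t : ℕ} (a : ℝ) (y : Fin t → Bool) : ℝ := ∏ s, coinWeight a (y s)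

section Coins

variable {n t : ℕ}

lemma coinWeight_nonneg {a : ℝ} (ha : a ∈ Set.Icc (0 : ℝ) 1) (b : Bool) : 0 ≤ coinWeight a b := by
  cases b <;> simp only [coinWeight, Bool.false_eq_true, if_true, if_false] <;> linarith [ha.1, ha.2]

lemma coinWeight_le_one {a : ℝ} (ha : a ∈ Set.Icc (0 : ℝ) 1) (b : Bool) : coinWeight a b ≤ 1 := by
  cases b <;> simp only [coinWeight, Bool.false_eq_true, if_true, if_false] <;> linarith [ha.1, ha.2]

lemma continuous_coinWeight (b : Bool) : Continuous fun a => coinWeight a b := by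
  cases b <;> simp only [coinWeight, Bool.false_eq_true, if_true, if_false] <;> fun_prop

lemma columnWeight_nonneg {a : ℝ} (ha : a ∈ Set.Icc (0 : ℝ) 1) (y : Fin t → Bool) :
    0 ≤ columnWeight a y :=
  prod_nonneg fun s _ => coinWeight_nonneg ha (y s)

lemma sum_columnWeight (a : ℝ) : ∑ y : Fin t → Bool, columnWeight a y = 1 := by
  simp only [columnWeight]
  rw [← Fintype.prod_sum]
  simp [coinWeight]

lemma columnWeight_le_pow {a : ℝ} (ha : a ∈ Set.Icc (0 : ℝ) 1) {b : Bool} {k : ℕ}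
    {y : Fin t → Bool} (hk : k ≤ #{s | y s = b}) : columnWeight a y ≤ coinWeight a b ^ k := by
  rw [columnWeight, ← prod_filter_mul_prod_filter_not univ (fun s => y s = b)]
  calc (∏ s with y s = b, coinWeight a (y s)) * ∏ s with ¬y s = b, coinWeight a (y s)
      ≤ coinWeight a b ^ #{s | y s = b} * 1 := by
        rw [prod_congr rfl fun s hs => by rw [(mem_filter.1 hs).2], prod_const]
        exact mul_le_mul_of_nonneg_left
          (prod_le_one (fun s _ => coinWeight_nonneg ha _) fun s _ => coinWeight_le_one ha _)
          (pow_nonneg (coinWeight_nonneg ha b) _)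
    _ ≤ coinWeight a b ^ k := by
        rw [mul_one]
        exact pow_le_pow_of_le_one (coinWeight_nonneg ha b) (coinWeight_le_one ha b) hk

lemma flipWeight_eq_prod_columnWeight (p : Fin n → ℝ) (x : Fin t → Fin n → Bool) :
    flipWeight p x = ∏ i, columnWeight (p i) (fun s => x s i) :=
  prod_comm

lemma flipWeight_nonneg {p : Fin n → ℝ} (hp : p ∈ cube n) (x : Fin t → Fin n → Bool) :
    0 ≤ flipWeight p x := by
  rw [flipWeight_eq_prod_columnWeight]
  exact prod_nonneg fun i _ => columnWeight_nonneg (hp i) _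

lemma coinProb_mono {p : Fin n → ℝ} (hp : p ∈ cube n) {E F : Set (Fin t → Fin n → Bool)}
    (h : E ⊆ F) : coinProb t p E ≤ coinProb t p F :=
  sum_le_sum fun x _ => Set.indicator_le_indicator_of_subset h (flipWeight_nonneg hp) x

lemma coinProb_columns (p : Fin n → ℝ) (C : Fin n → Set (Fin t → Bool)) :
    coinProb t p {x | ∀ i, (fun s => x s i) ∈ C i}
      = ∏ i, ∑ y, (C i).indicator (columnWeight (p i)) y := by
  classical
  rw [Fintype.prod_sum, coinProb]
  refine Fintype.sum_equiv (Equiv.piComm fun _ _ => Bool) _ _ fun x => ?_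
  simp only [Set.indicator_apply, prod_ite_zero, flipWeight_eq_prod_columnWeight]
  split_ifs with h₁ h₂ h₂
  · rfl
  · exact absurd (fun i _ => h₁ i) h₂
  · exact absurd (fun i => h₂ i (mem_univ i)) h₁
  · rfl

lemma coinProb_le_of_le_card {p : Fin n → ℝ} (hp : p ∈ cube n) (T : Finset (Fin n))
    (b : Fin n → Bool) (k : ℕ) :
    coinProb t p {x | ∀ i ∈ T, k ≤ #{s | x s i = b i}}
      ≤ ∏ i ∈ T, 2 ^ t * coinWeight (p i) (b i) ^ k := by
  have hE : {x : Fin t → Fin n → Bool | ∀ i ∈ T, k ≤ #{s | x s i = b i}}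
      = {x | ∀ i, (fun s => x s i) ∈ {y : Fin t → Bool | i ∈ T → k ≤ #{s | y s = b i}}} := rfl
  rw [hE, coinProb_columns, ← Fintype.prod_extend_by_one T]
  refine prod_le_prod (fun i _ => sum_nonneg fun y _ =>
    Set.indicator_nonneg (fun y _ => columnWeight_nonneg (hp i) y) y) fun i _ => ?_
  split_ifs with hi
  · calc ∑ y, Set.indicator {y | i ∈ T → k ≤ #{s | y s = b i}} (columnWeight (p i)) y
        ≤ ∑ _y : Fin t → Bool, coinWeight (p i) (b i) ^ k := by
          refine sum_le_sum fun y _ => ?_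
          rw [Set.indicator_apply]
          split_ifs with hy
          · exact columnWeight_le_pow (hp i) (hy hi)
          · exact pow_nonneg (coinWeight_nonneg (hp i) _) _
      _ = 2 ^ t * coinWeight (p i) (b i) ^ k := by simp
  · simp [hi, sum_columnWeight]

lemma natCast_card_heads (x : Fin t → Fin n → Bool) (i : Fin n) :
    (#{s | x s i = true} : ℝ) = t * empAvg t x i := by
  rcases t.eq_zero_or_pos with rfl | ht
  · simp
  · rw [empAvg, sum_boole, mul_div_cancel₀ _ (by positivity)]

lemma natCast_card_tails (x : Fin t → Fin n → Bool) (i : Fin n) :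
    (#{s | x s i = false} : ℝ) = t * (1 - empAvg t x i) := by
  have h := card_filter_add_card_filter_not (s := univ) (fun s => x s i = true)
  simp only [Bool.not_eq_true, card_univ, Fintype.card_fin] at h
  rw [mul_one_sub, ← natCast_card_heads, eq_sub_iff_add_eq]
  exact_mod_cast (add_comm _ _).trans h

lemma deviation_subset {p : Fin n → ℝ} (hp : p ∈ cube n) {A B T : Finset (Fin n)}
    (hT : T ⊆ A ∪ B) {δ : ℝ} {k : ℕ} (hk : (k : ℝ) ≤ t * (δ / 2)) :
    {x : Fin t → Fin n → Bool | (∀ i ∈ T ∩ A, δ / 2 < empAvg t x i - p i) ∧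
        (∀ i ∈ T ∩ B, δ / 2 < p i - empAvg t x i)}
      ⊆ {x | ∀ i ∈ T, k ≤ #{s | x s i = decide (i ∈ A)}} := by
  rintro x ⟨hxA, hxB⟩ i hi
  have ht : (0 : ℝ) ≤ t := t.cast_nonneg
  by_cases hiA : i ∈ A
  · have hdev := hxA i (mem_inter.2 ⟨hi, hiA⟩)
    rw [decide_eq_true hiA, ← Nat.cast_le (α := ℝ), natCast_card_heads]
    nlinarith [(hp i).1]
  · have hdev := hxB i (mem_inter.2 ⟨hi, (mem_union.1 (hT hi)).resolve_left hiA⟩)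
    rw [decide_eq_false hiA, ← Nat.cast_le (α := ℝ), natCast_card_tails]
    nlinarith [(hp i).2]

lemma coinProb_deviation_le {p : Fin n → ℝ} (hp : p ∈ cube n) {A B T : Finset (Fin n)}
    (hT : T ⊆ A ∪ B) {δ : ℝ} {k : ℕ} (hk : (k : ℝ) ≤ t * (δ / 2)) :
    coinProb t p {x | (∀ i ∈ T ∩ A, δ / 2 < empAvg t x i - p i) ∧
        (∀ i ∈ T ∩ B, δ / 2 < p i - empAvg t x i)}
      ≤ 2 ^ (t * n) * (∏ i ∈ T, coinWeight (p i) (decide (i ∈ A))) ^ k := by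
  calc _ ≤ coinProb t p {x | ∀ i ∈ T, k ≤ #{s | x s i = decide (i ∈ A)}} :=
        coinProb_mono hp (deviation_subset hp hT hk)
    _ ≤ ∏ i ∈ T, 2 ^ t * coinWeight (p i) (decide (i ∈ A)) ^ k := coinProb_le_of_le_card hp T _ _
    _ = 2 ^ (t * #T) * (∏ i ∈ T, coinWeight (p i) (decide (i ∈ A))) ^ k := by
        rw [prod_mul_distrib, prod_const, prod_pow, pow_mul]
    _ ≤ 2 ^ (t * n) * (∏ i ∈ T, coinWeight (p i) (decide (i ∈ A))) ^ k := by
        gcongr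
        · exact pow_nonneg (prod_nonneg fun i _ => coinWeight_nonneg (hp i) _) _
        · norm_num
        · simpa using card_le_univ T

end Coins

section Faces

variable {n : ℕ}

lemma facePoly_eq_prod {A B : Finset (Fin n)} (hAB : Disjoint A B) (p : Fin n → ℝ) :
    facePoly A B p = ∏ i, if i ∈ A then 1 - p i else if i ∈ B then p i else p i * (1 - p i) := by
  rw [← prod_mul_prod_compl (A ∪ B), prod_union hAB, facePoly]
  have hA : ∀ i ∈ A, (if i ∈ A then 1 - p i else if i ∈ B then p i else p i * (1 - p i))
      = 1 - p i := fun i hi => if_pos hi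
  have hB : ∀ i ∈ B, (if i ∈ A then 1 - p i else if i ∈ B then p i else p i * (1 - p i))
      = p i := fun i hi => by rw [if_neg (disjoint_right.1 hAB hi), if_pos hi]
  have hS : ∀ i ∈ (A ∪ B)ᶜ, (if i ∈ A then 1 - p i else if i ∈ B then p i else p i * (1 - p i))
      = p i * (1 - p i) := fun i hi => by
    rw [mem_compl, mem_union, not_or] at hi
    rw [if_neg hi.1, if_neg hi.2]
  rw [prod_congr rfl hA, prod_congr rfl hB, prod_congr rfl hS]
  ring

lemma facePoly_sdiff {A B T : Finset (Fin n)} (hAB : Disjoint A B) (hT : T ⊆ A ∪ B)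
    (p : Fin n → ℝ) :
    facePoly (A \ T) (B \ T) p
      = facePoly A B p * ∏ i ∈ T, coinWeight (p i) (decide (i ∈ A)) := by
  rw [facePoly_eq_prod (hAB.mono sdiff_subset sdiff_subset), facePoly_eq_prod hAB,
    ← Fintype.prod_extend_by_one T, ← prod_mul_distrib]
  refine prod_congr rfl fun i _ => ?_
  simp only [Finset.mem_sdiff]
  by_cases hiT : i ∈ T <;> by_cases hiA : i ∈ A <;> by_cases hiB : i ∈ B <;>
    simp [hiT, hiA, hiB, coinWeight]
  · exact absurd hiB (disjoint_left.1 hAB hiA)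
  · ring
  · simpa [hiA, hiB] using hT hiT

lemma facePoly_pos {A B : Finset (Fin n)} {q : Fin n → ℝ} (hq : q ∈ face A B) :
    0 < facePoly A B q := by
  obtain ⟨hqA, hqB, hqS⟩ := hq
  unfold facePoly
  refine mul_pos (mul_pos (prod_pos fun i hi => by simp [hqA i hi])
    (prod_pos fun i hi => ?_)) (prod_pos fun i hi => by simp [hqB i hi])
  obtain ⟨h0, h1⟩ := hqS i (mem_compl.1 hi)
  exact mul_pos h0 (sub_pos.2 h1)

lemma continuous_facePoly (A B : Finset (Fin n)) : Continuous (facePoly A B) := by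
  unfold facePoly
  fun_prop

lemma prod_coinWeight_eq_zero_of_mem_face {A B T : Finset (Fin n)}
    (hT : T ⊆ A ∪ B) (hTne : T.Nonempty) {q : Fin n → ℝ} (hq : q ∈ face A B) :
    ∏ i ∈ T, coinWeight (q i) (decide (i ∈ A)) = 0 := by
  obtain ⟨i, hi⟩ := hTne
  refine prod_eq_zero hi ?_
  by_cases hiA : i ∈ A
  · simp [coinWeight, hiA, hq.1 i hiA]
  · have hiB := (mem_union.1 (hT hi)).resolve_left hiA
    simp [coinWeight, hiA, hq.2.1 i hiB]

lemma eventually_facePoly_gt_and_prod_coinWeight_lt {A B T : Finset (Fin n)} (hT : T ⊆ A ∪ B)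
    (hTne : T.Nonempty) {q : Fin n → ℝ} (hq : q ∈ face A B) {η : ℝ} (hη : 0 < η) :
    ∀ᶠ p in 𝓝 q, facePoly A B q / 2 < facePoly A B p ∧
      ∏ i ∈ T, coinWeight (p i) (decide (i ∈ A)) < η := by
  have hQ : Continuous fun p : Fin n → ℝ => ∏ i ∈ T, coinWeight (p i) (decide (i ∈ A)) :=
    continuous_finsetProd T fun i _ => (continuous_coinWeight _).comp (continuous_apply i)
  refine (continuous_const.continuousAt.eventually_lt (continuous_facePoly A B).continuousAt
      (half_lt_self (facePoly_pos hq))).and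
    (hQ.continuousAt.eventually_lt continuous_const.continuousAt ?_)
  rwa [prod_coinWeight_eq_zero_of_mem_face hT hTne hq]

end Faces

theorem stmt5_general {n : ℕ} (f : (Fin n → ℝ) → ℝ)
    (hpb : PolyBounded f)
    (L : Set (Fin n → ℝ)) (hL : L = {p ∈ cube n | f p ≤ 3 / 8})
    (δ : ℝ) (hδ0 : 0 < δ)
    (A B : Finset (Fin n)) (hAB : Disjoint A B)
    (q : Fin n → ℝ) (hq : q ∈ face A B)
    (hzero : ∀ p ∈ face A B, f p = 0)
    (T : Finset (Fin n)) (hT : T ⊆ A ∪ B)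
    (hnz : ¬ ∀ p ∈ face (A \ T) (B \ T), f p = 0) :
    ∃ r : ℝ, 0 < r ∧ ∃ t : ℕ, ∀ p ∈ L, ‖p - q‖ < r →
      coinProb t p
          {x | (∀ i ∈ T ∩ A, δ / 2 < empAvg t x i - p i) ∧
               (∀ i ∈ T ∩ B, δ / 2 < p i - empAvg t x i)}
        ≤ f p / 2 ^ (n + 2) := by
  obtain ⟨m, c, hc, hpoly⟩ := hpb
  have hTne : T.Nonempty := nonempty_iff_ne_empty.2 fun h => hnz (by simpa [h] using hzero)
  obtain ⟨t, ht⟩ := exists_nat_ge (((m + 1 : ℕ) : ℝ) / (δ / 2))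
  set κ := facePoly A B q / 2
  have hκ : 0 < κ := half_pos (facePoly_pos hq)
  set η := c * κ ^ m / (2 ^ (t * n) * 2 ^ (n + 2))
  obtain ⟨r, hr, hnear⟩ := Metric.eventually_nhds_iff.1
    (eventually_facePoly_gt_and_prod_coinWeight_lt hT hTne hq (η := η) (by positivity))
  refine ⟨r, hr, t, fun p hpL hpq => ?_⟩
  have hp : p ∈ cube n := (hL ▸ hpL).1
  obtain ⟨hκp, hQη⟩ := hnear (by rwa [dist_eq_norm])
  set Q := ∏ i ∈ T, coinWeight (p i) (decide (i ∈ A))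
  have hQ : 0 ≤ Q := prod_nonneg fun i _ => coinWeight_nonneg (hp i) _
  calc _ ≤ 2 ^ (t * n) * Q ^ (m + 1) :=
        coinProb_deviation_le hp hT ((div_le_iff₀ (by positivity)).1 ht)
    _ ≤ 2 ^ (t * n) * Q ^ m * η := by
        rw [pow_succ, ← mul_assoc]
        gcongr
    _ = c * (κ * Q) ^ m / 2 ^ (n + 2) := by
        simp only [η]
        field_simp
        ring
    _ ≤ c * facePoly (A \ T) (B \ T) p ^ m / 2 ^ (n + 2) := by
        rw [facePoly_sdiff hAB hT]
        gcongr
    _ ≤ f p / 2 ^ (n + 2) := by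
        gcongr
        exact hpoly _ _ (hAB.mono sdiff_subset sdiff_subset) hnz p hp

theorem stmt5 {n : ℕ} (f : (Fin n → ℝ) → ℝ)
    (hrange : ∀ p ∈ cube n, f p ∈ Set.Icc (0 : ℝ) 1)
    (hcont : ContinuousOn f (cube n))
    (hpb : PolyBounded f)
    (L : Set (Fin n → ℝ)) (hL : L = {p ∈ cube n | f p ≤ 3 / 8})
    (δ : ℝ) (hδ0 : 0 < δ) (hδhalf : δ < 1 / 2)
    (A B : Finset (Fin n)) (hAB : Disjoint A B)
    (q : Fin n → ℝ) (hq : q ∈ face A B)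
    (hzero : ∀ p ∈ face A B, f p = 0)
    (T : Finset (Fin n)) (hT : T ⊆ A ∪ B)
    (hnz : ¬ ∀ p ∈ face (A \ T) (B \ T), f p = 0) :
    ∃ r : ℝ, 0 < r ∧ ∃ t : ℕ, ∀ p ∈ L, ‖p - q‖ < r →
      coinProb t p
          {x | (∀ i ∈ T ∩ A, δ / 2 < empAvg t x i - p i) ∧
               (∀ i ∈ T ∩ B, δ / 2 < p i - empAvg t x i)}
        ≤ f p / 2 ^ (n + 2) :=
  stmt5_general f hpb L hL δ hδ0 A B hAB q hq hzero T hT hnz
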